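/- The diameter of the diameter lower-bound graph G_{x,y} is at least 5 if and only if x and y are not disjoint, i.e., if and only if there exists an index i ∈ {0,…,k−1} with x[i] = y[i] = 1. -/
import Mathlib


/-- Vertices of the diameter lower-bound graph `G_{x,y}`:
`a i`, `b i`, bit-nodes `fA h`, `tA h`, `fB h`, `tB h`, and the four extra
nodes `cA`, `cA'` (= c̄_A), `cB`, `cB'` (= c̄_B). -/
inductive DVertex (k logk : ℕ) where
  | a (i : Fin k)
  | b (i : Fin k)
  | fA (h : Fin logk)
  | tA (h : Fin logk)
  | fB (h : Fin logk)
  | tB (h : Fin logk)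
  | cA
  | cA'
  | cB
  | cB'
deriving DecidableEq

/-- Base relation generating the edges of the diameter lower-bound graph `G_{x,y}`. -/
def dRel (k logk : ℕ) (x y : Fin k → Bool) : DVertex k logk → DVertex k logk → Prop
  | .a i, .fA h => i.val.testBit h.val = false
  | .a i, .tA h => i.val.testBit h.val = true
  | .b i, .fB h => i.val.testBit h.val = false
  | .b i, .tB h => i.val.testBit h.val = true
  | .fA h, .tB h' => h = h'
  | .tA h, .fB h' => h = h'
  | .a _, .cA => True
  | .b _, .cB => True
  | .fA _, .cA' => True
  | .tA _, .cA' => True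
  | .fB _, .cB' => True
  | .tB _, .cB' => True
  | .cA, .cA' => True
  | .cB, .cB' => True
  | .cA', .cB' => True
  | .a i, .cA' => x i = false
  | .b i, .cB' => y i = false
  | _, _ => False

/-- The diameter lower-bound graph `G_{x,y}`. -/
def dGraph (k logk : ℕ) (x y : Fin k → Bool) : SimpleGraph (DVertex k logk) :=
  SimpleGraph.fromRel (dRel k logk x y)

private def dpot {k logk : ℕ} (i : Fin k) : DVertex k logk → ℕ
  | .a j => if j = i then 0 else 2
  | .cA => 1
  | .cA' => 2
  | .fA h => if i.val.testBit h.val = false then 1 else 3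
  | .tA h => if i.val.testBit h.val = true then 1 else 3
  | .b j => if j = i then 5 else 3
  | .cB => 4
  | .cB' => 3
  | .fB h => if i.val.testBit h.val = false then 4 else 2
  | .tB h => if i.val.testBit h.val = true then 4 else 2

private lemma dpot_lip {k logk : ℕ} {x y : Fin k → Bool} (i : Fin k)
    (hx : x i = true) (hy : y i = true) :
    ∀ u v, dRel k logk x y u v →
      dpot i v ≤ dpot i u + 1 ∧ dpot i u ≤ dpot i v + 1 := by
  intro u v h
  cases u <;> cases v <;> simp only [dRel] at h <;>
    simp only [dpot] <;> first | omega | (split_ifs <;> simp_all <;> omega)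

open SimpleGraph in
private lemma lb {k logk : ℕ} {x y : Fin k → Bool} (i : Fin k)
    (hx : x i = true) (hy : y i = true) :
    5 ≤ (dGraph k logk x y).ediam := by
  set G := dGraph k logk x y with hG
  have hlip : ∀ u v, G.Adj u v → dpot i v ≤ dpot i u + 1 := by
    rintro u v ⟨hne, h | h⟩
    · exact (dpot_lip i hx hy u v h).1
    · exact (dpot_lip i hx hy v u h).2
  have hwalk : ∀ (u v : DVertex k logk) (p : G.Walk u v),
      dpot i v ≤ dpot i u + p.length := by
    intro u v p
    induction p with
    | nil => simp
    | @cons u w v h p ih =>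
      have := hlip u w h
      simp only [SimpleGraph.Walk.length_cons]
      omega
  have h5 : 5 ≤ G.edist (.a i) (.b i) := by
    rw [SimpleGraph.edist_eq_sInf]
    apply le_sInf
    rintro w ⟨p, rfl⟩
    have := hwalk _ _ p
    simp only [dpot, if_pos rfl, if_true] at this
    show (5 : ℕ∞) ≤ (p.length : ℕ)
    have h5 : 5 ≤ p.length := by omega
    exact_mod_cast h5
  exact h5.trans SimpleGraph.edist_le_ediam

open SimpleGraph DVertex in
private lemma ub {k logk : ℕ} {x y : Fin k → Bool} (hlog : 0 < logk)
    (hk2 : k ≤ 2 ^ logk) (hdisj : ∀ i, x i = true → y i = false) :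
    (dGraph k logk x y).ediam ≤ 4 := by
  set G := dGraph k logk x y with hG
  have adj : ∀ {u v : DVertex k logk}, u ≠ v → dRel k logk x y u v → G.Adj u v :=
    fun hne h => ⟨hne, Or.inl h⟩
  have adj' : ∀ {u v : DVertex k logk}, u ≠ v → dRel k logk x y v u → G.Adj u v :=
    fun hne h => ⟨hne, Or.inr h⟩
  have e1 : ∀ {u v : DVertex k logk}, G.Adj u v → G.edist u v ≤ 1 := by
    intro u v h
    simpa using G.edist_le (SimpleGraph.Walk.cons h SimpleGraph.Walk.nil)
  have e2 : ∀ {u w v : DVertex k logk}, G.Adj u w → G.Adj w v → G.edist u v ≤ 2 := by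
    intro u w v h1 h2
    simpa using G.edist_le (SimpleGraph.Walk.cons h1 (SimpleGraph.Walk.cons h2 SimpleGraph.Walk.nil))
  have e3 : ∀ {u w w' v : DVertex k logk}, G.Adj u w → G.Adj w w' → G.Adj w' v →
      G.edist u v ≤ 3 := by
    intro u w w' v h1 h2 h3
    simpa using G.edist_le (SimpleGraph.Walk.cons h1 (SimpleGraph.Walk.cons h2
      (SimpleGraph.Walk.cons h3 SimpleGraph.Walk.nil)))
  have tri4 : ∀ {u v w : DVertex k logk}, G.edist u w ≤ 2 → G.edist v w ≤ 2 →
      G.edist u v ≤ 4 := by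
    intro u v w h1 h2
    calc G.edist u v ≤ G.edist u w + G.edist w v := G.edist_triangle
    _ ≤ 2 + 2 := add_le_add h1 (by rw [G.edist_comm]; exact h2)
    _ = 4 := by norm_num
  let h0 : Fin logk := ⟨0, hlog⟩
  have afBcB' : ∀ h : Fin logk, G.Adj (.fB h) .cB' :=
    fun h => adj (by simp) (show dRel k logk x y (.fB h) .cB' from trivial)
  have atBcB' : ∀ h : Fin logk, G.Adj (.tB h) .cB' :=
    fun h => adj (by simp) (show dRel k logk x y (.tB h) .cB' from trivial)
  have afAcA' : ∀ h : Fin logk, G.Adj (.fA h) .cA' :=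
    fun h => adj (by simp) (show dRel k logk x y (.fA h) .cA' from trivial)
  have atAcA' : ∀ h : Fin logk, G.Adj (.tA h) .cA' :=
    fun h => adj (by simp) (show dRel k logk x y (.tA h) .cA' from trivial)
  have acAcA' : G.Adj (.cA : DVertex k logk) .cA' :=
    adj (by simp) (show dRel k logk x y .cA .cA' from trivial)
  have acBcB' : G.Adj (.cB : DVertex k logk) .cB' :=
    adj (by simp) (show dRel k logk x y .cB .cB' from trivial)
  have acA'cB' : G.Adj (.cA' : DVertex k logk) .cB' :=
    adj (by simp) (show dRel k logk x y .cA' .cB' from trivial)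
  have aacA : ∀ i : Fin k, G.Adj (.a i) .cA :=
    fun i => adj (by simp) (show dRel k logk x y (.a i) .cA from trivial)
  have abcB : ∀ j : Fin k, G.Adj (.b j) .cB :=
    fun j => adj (by simp) (show dRel k logk x y (.b j) .cB from trivial)
  have ebB' : ∀ j : Fin k, G.edist (DVertex.b j) .cB' ≤ 2 := by
    intro j
    cases hbj : j.val.testBit 0 with
    | false =>
      exact e2 (adj (by simp) (show dRel k logk x y (.b j) (.fB h0) from hbj)) (afBcB' h0)
    | true =>
      exact e2 (adj (by simp) (show dRel k logk x y (.b j) (.tB h0) from hbj)) (atBcB' h0)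
  have spec : ∀ i j : Fin k, x i = true → y j = true →
      G.edist (DVertex.a i) (DVertex.b j) ≤ 3 := by
    intro i j hxi hyj
    have hij : (i : ℕ) ≠ (j : ℕ) := by
      intro hv
      have : i = j := Fin.val_injective hv
      subst this
      rw [hdisj i hxi] at hyj
      exact Bool.false_ne_true hyj
    have hex : ∃ h, i.val.testBit h ≠ j.val.testBit h := by
      by_contra hc
      push_neg at hc
      exact hij (Nat.eq_of_testBit_eq hc)
    obtain ⟨h, hh⟩ := hex
    have hlt : h < logk := by
      by_contra hge
      push_neg at hge
      have hpow : k ≤ 2 ^ h := hk2.trans (Nat.pow_le_pow_right (by norm_num) hge)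
      rw [Nat.testBit_lt_two_pow (lt_of_lt_of_le i.isLt hpow),
        Nat.testBit_lt_two_pow (lt_of_lt_of_le j.isLt hpow)] at hh
      exact hh rfl
    cases hbi : i.val.testBit h with
    | false =>
      have hbj : j.val.testBit h = true := by
        revert hh; cases hb2 : j.val.testBit h <;> simp [hbi, hb2]
      exact e3 (adj (by simp) (show dRel k logk x y (.a i) (.fA ⟨h, hlt⟩) from hbi))
        (adj (by simp) (show dRel k logk x y (.fA ⟨h, hlt⟩) (.tB ⟨h, hlt⟩) from rfl))
        (adj' (by simp) (show dRel k logk x y (.b j) (.tB ⟨h, hlt⟩) from hbj))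
    | true =>
      have hbj : j.val.testBit h = false := by
        revert hh; cases hb2 : j.val.testBit h <;> simp [hbi, hb2]
      exact e3 (adj (by simp) (show dRel k logk x y (.a i) (.tA ⟨h, hlt⟩) from hbi))
        (adj (by simp) (show dRel k logk x y (.tA ⟨h, hlt⟩) (.fB ⟨h, hlt⟩) from rfl))
        (adj' (by simp) (show dRel k logk x y (.b j) (.fB ⟨h, hlt⟩) from hbj))
  have h12 : (1 : ℕ∞) ≤ 2 := by norm_num
  have dA : ∀ u : DVertex k logk, G.edist u .cA' ≤ 2 ∨ ∃ j, u = DVertex.b j ∧ y j = true := by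
    intro u
    cases u with
    | a i =>
      left
      cases hbi : i.val.testBit 0 with
      | false =>
        exact e2 (adj (by simp) (show dRel k logk x y (.a i) (.fA h0) from hbi)) (afAcA' h0)
      | true =>
        exact e2 (adj (by simp) (show dRel k logk x y (.a i) (.tA h0) from hbi)) (atAcA' h0)
    | b j =>
      cases hyj : y j with
      | true => exact Or.inr ⟨j, rfl, hyj⟩
      | false =>
        exact Or.inl (e2 (adj (by simp) (show dRel k logk x y (.b j) .cB' from hyj))
          acA'cB'.symm)
    | fA h => exact Or.inl ((e1 (afAcA' h)).trans h12)
    | tA h => exact Or.inl ((e1 (atAcA' h)).trans h12)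
    | fB h => exact Or.inl (e2 (afBcB' h) acA'cB'.symm)
    | tB h => exact Or.inl (e2 (atBcB' h) acA'cB'.symm)
    | cA => exact Or.inl ((e1 acAcA').trans h12)
    | cA' => exact Or.inl (by simp [SimpleGraph.edist_self])
    | cB => exact Or.inl (e2 acBcB' acA'cB'.symm)
    | cB' => exact Or.inl ((e1 acA'cB'.symm).trans h12)
  have dB : ∀ u : DVertex k logk, G.edist u .cB' ≤ 2 ∨ ∃ i, u = DVertex.a i ∧ x i = true := by
    intro u
    cases u with
    | a i =>
      cases hxi : x i with
      | true => exact Or.inr ⟨i, rfl, hxi⟩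
      | false =>
        exact Or.inl (e2 (adj (by simp) (show dRel k logk x y (.a i) .cA' from hxi)) acA'cB')
    | b j => exact Or.inl (ebB' j)
    | fA h => exact Or.inl (e2 (afAcA' h) acA'cB')
    | tA h => exact Or.inl (e2 (atAcA' h) acA'cB')
    | fB h => exact Or.inl ((e1 (afBcB' h)).trans h12)
    | tB h => exact Or.inl ((e1 (atBcB' h)).trans h12)
    | cA => exact Or.inl (e2 acAcA' acA'cB')
    | cA' => exact Or.inl ((e1 acA'cB').trans h12)
    | cB => exact Or.inl ((e1 acBcB').trans h12)
    | cB' => exact Or.inl (by simp [SimpleGraph.edist_self])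
  apply SimpleGraph.ediam_le_of_edist_le
  intro u v
  have h34 : (3 : ℕ∞) ≤ 4 := by norm_num
  rcases dA u with hu | ⟨j, rfl, hyj⟩
  · rcases dA v with hv | ⟨j, rfl, hyj⟩
    · exact tri4 hu hv
    · rcases dB u with hu' | ⟨i, rfl, hxi⟩
      · exact tri4 hu' (ebB' j)
      · exact (spec i j hxi hyj).trans h34
  · rcases dB v with hv | ⟨i, rfl, hxi⟩
    · exact tri4 (ebB' j) hv
    · rw [G.edist_comm]
      exact (spec i j hxi hyj).trans h34

/-- the diameter of `G_{x,y}` (the maximum over all pairs of nodes of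
their hop distance, as an extended natural number) is at least `5` if and only if
`x` and `y` are not disjoint, i.e. iff there is an index `i` with `x i = y i = 1`. -/
theorem dGraph_diam_ge_five_iff (k logk : ℕ) (hk : 2 ≤ k) (hpow : k = 2 ^ logk)
    (x y : Fin k → Bool) :
    5 ≤ (dGraph k logk x y).ediam ↔ ∃ i : Fin k, x i = true ∧ y i = true := by
  constructor
  · intro h5
    by_contra hcon
    push_neg at hcon
    have hdisj : ∀ i, x i = true → y i = false := by
      intro i hxi
      simpa using hcon i hxi
    have hlog : 0 < logk := by
      rcases Nat.eq_zero_or_pos logk with h | h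
      · subst h; simp at hpow; omega
      · exact h
    have h4 : (5 : ℕ∞) ≤ 4 := h5.trans (ub hlog hpow.le hdisj)
    norm_num at h4
  · rintro ⟨i, hxi, hyi⟩
    exact lb i hxi hyi
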